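/- Let S : [−1/2,1/2] × 𝕋^m → ℝ^d be C¹ in the torus variable and write ∂_τ S = ω·∇_φ S. Define A(φ) = ∫₀¹∫₀^λ∫₀^{λ'} ∂_τS(λ−1/2,φ)·S(λ''−1/2,φ) dλ'' dλ' dλ and B(φ) the same with S(μ,φ) replaced by S(−μ,φ). Then ∫_{𝕋^m} (A(φ) + B(φ)) dφ = 0. -/

import Mathlib

open MeasureTheory Set intervalIntegral Function
set_option maxHeartbeats 1000000

lemma cauchy_iter (g : ℝ → ℝ) (hg : Continuous g) (a : ℝ) :
    (∫ x in (0:ℝ)..a, ∫ y in (0:ℝ)..x, g y) = ∫ y in (0:ℝ)..a, (a - y) * g y := by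
  have hG : Continuous fun x => ∫ y in (0:ℝ)..x, g y :=
    intervalIntegral.continuous_primitive (fun a b => hg.intervalIntegrable a b) 0
  have hyg : Continuous fun y => y * g y := continuous_id.mul hg
  set Φ : ℝ → ℝ := fun u => (∫ x in (0:ℝ)..u, ∫ y in (0:ℝ)..x, g y)
      - (u * (∫ y in (0:ℝ)..u, g y) - ∫ y in (0:ℝ)..u, y * g y) with hΦ
  have hderiv : ∀ u, HasDerivAt Φ 0 u := by
    intro u
    have h1 : HasDerivAt (fun u => ∫ x in (0:ℝ)..u, ∫ y in (0:ℝ)..x, g y)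
        (∫ y in (0:ℝ)..u, g y) u :=
      intervalIntegral.integral_hasDerivAt_right (hG.intervalIntegrable 0 u)
        (hG.stronglyMeasurableAtFilter _ _) hG.continuousAt
    have h2 : HasDerivAt (fun u => ∫ y in (0:ℝ)..u, g y) (g u) u :=
      intervalIntegral.integral_hasDerivAt_right (hg.intervalIntegrable 0 u)
        (hg.stronglyMeasurableAtFilter _ _) hg.continuousAt
    have h3 : HasDerivAt (fun u => ∫ y in (0:ℝ)..u, y * g y) (u * g u) u :=
      intervalIntegral.integral_hasDerivAt_right (hyg.intervalIntegrable 0 u)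
        (hyg.stronglyMeasurableAtFilter _ _) hyg.continuousAt
    have h4 : HasDerivAt (fun u => u * ∫ y in (0:ℝ)..u, g y)
        (1 * (∫ y in (0:ℝ)..u, g y) + u * g u) u := (hasDerivAt_id u).mul h2
    have h5 := h1.sub (h4.sub h3)
    replace h5 : HasDerivAt Φ _ u := h5
    convert h5 using 1
    ring
  have hconst : Φ a = Φ 0 :=
    is_const_of_deriv_eq_zero (fun u => (hderiv u).differentiableAt)
      (fun u => (hderiv u).deriv) a 0
  have h0 : Φ 0 = 0 := by simp [hΦ]
  have key : (∫ x in (0:ℝ)..a, ∫ y in (0:ℝ)..x, g y)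
      = a * (∫ y in (0:ℝ)..a, g y) - ∫ y in (0:ℝ)..a, y * g y := by
    have h6 := hconst.trans h0
    simp only [hΦ] at h6
    linarith
  rw [key]
  rw [show (fun y => (a - y) * g y) = fun y => a * g y - y * g y by funext y; ring]
  rw [intervalIntegral.integral_sub (f := fun y => a * g y) ((continuous_const.mul hg).intervalIntegrable 0 a)
    (hyg.intervalIntegrable 0 a), intervalIntegral.integral_const_mul]


lemma swap_cube_interval {m : ℕ} (k : ℝ → (Fin m → ℝ) → ℝ)
    (hk : Continuous fun p : ℝ × (Fin m → ℝ) => k p.1 p.2) :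
    (∫ φ in Set.Icc (0 : Fin m → ℝ) 1, ∫ x in (0:ℝ)..1, k x φ)
      = ∫ x in (0:ℝ)..1, ∫ φ in Set.Icc (0 : Fin m → ℝ) 1, k x φ := by
  simp only [intervalIntegral.integral_of_le (zero_le_one (α := ℝ))]
  have hint : Integrable (uncurry fun (φ : Fin m → ℝ) (x : ℝ) => k x φ)
      ((volume.restrict (Set.Icc (0 : Fin m → ℝ) 1)).prod (volume.restrict (Ioc (0:ℝ) 1))) := by
    rw [Measure.prod_restrict]
    apply (IntegrableOn.mono_set (t := (Set.Icc (0 : Fin m → ℝ) 1) ×ˢ (Icc (0:ℝ) 1)))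
    · exact ((hk.comp continuous_swap).continuousOn).integrableOn_compact
        (isCompact_Icc.prod isCompact_Icc)
    · exact Set.prod_mono subset_rfl Ioc_subset_Icc_self
  exact MeasureTheory.integral_integral_swap hint

lemma swap_square (Q : ℝ → ℝ → ℝ) (hQ : Continuous fun p : ℝ × ℝ => Q p.1 p.2) :
    (∫ x in (0:ℝ)..1, ∫ y in (0:ℝ)..1, Q x y)
      = ∫ y in (0:ℝ)..1, ∫ x in (0:ℝ)..1, Q x y := by
  simp only [intervalIntegral.integral_of_le (zero_le_one (α := ℝ))]
  have hint : Integrable (uncurry Q)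
      ((volume.restrict (Ioc (0:ℝ) 1)).prod (volume.restrict (Ioc (0:ℝ) 1))) := by
    rw [Measure.prod_restrict]
    apply (IntegrableOn.mono_set (t := (Icc (0:ℝ) 1) ×ˢ (Icc (0:ℝ) 1)))
    · exact hQ.continuousOn.integrableOn_compact (isCompact_Icc.prod isCompact_Icc)
    · exact Set.prod_mono Ioc_subset_Icc_self Ioc_subset_Icc_self
  exact MeasureTheory.integral_integral_swap hint


lemma torus_dir_deriv {m : ℕ} (ω : Fin m → ℝ)
    (g : (Fin m → ℝ) → ℝ) (g' : (Fin m → ℝ) → ((Fin m → ℝ) →L[ℝ] ℝ))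
    (hg' : ∀ φ, HasFDerivAt g (g' φ) φ)
    (hgc : Continuous g)
    (hg'c : Continuous fun φ => g' φ ω)
    (hper : ∀ (φ : Fin m → ℝ) (i : Fin m), g (φ + Pi.single i 1) = g φ) :
    ∫ φ in Set.Icc (0 : Fin m → ℝ) 1, g' φ ω = 0 := by
  cases m with
  | zero =>
    have hω : ω = 0 := Subsingleton.elim _ _
    have hz : ∀ φ : Fin 0 → ℝ, g' φ ω = 0 := fun φ => by
      rw [hω]; exact (g' φ).map_zero
    simp [hz]
  | succ n =>
    set f : (Fin (n+1) → ℝ) → (Fin (n+1) → ℝ) := fun x i => ω i * g x with hf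
    set f' : (Fin (n+1) → ℝ) → ((Fin (n+1) → ℝ) →L[ℝ] (Fin (n+1) → ℝ)) :=
      fun x => ContinuousLinearMap.pi (fun i => ω i • g' x) with hf'
    have hωsum : ∀ x, (∑ i, f' x (Pi.single i 1) i) = g' x ω := by
      intro x
      have : ω = ∑ i, ω i • (Pi.single i (1:ℝ) : Fin (n+1) → ℝ) := by
        funext j
        simp [Finset.sum_apply, Pi.single_apply]
      calc (∑ i, f' x (Pi.single i 1) i) = ∑ i, ω i * g' x (Pi.single i 1) := by
            simp [hf', ContinuousLinearMap.pi_apply]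
        _ = g' x (∑ i, ω i • (Pi.single i (1:ℝ) : Fin (n+1) → ℝ)) := by
            rw [map_sum]; simp [smul_eq_mul]
        _ = g' x ω := by rw [← this]
    have key := MeasureTheory.integral_divergence_of_hasFDerivAt_off_countable
      (a := (0 : Fin (n+1) → ℝ)) (b := 1) zero_le_one f f' ∅ countable_empty
      (Continuous.continuousOn (by fun_prop))
      (fun x _ => by
        apply hasFDerivAt_pi''
        intro i
        have := (hg' x).const_mul (ω i)
        exact this)
      (by
        have : (fun x => ∑ i, f' x (Pi.single i 1) i) = fun x => g' x ω := funext hωsum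
        rw [this]
        exact hg'c.continuousOn.integrableOn_compact isCompact_Icc)
    have hfaces : ∀ i : Fin (n+1), ∀ x : Fin n → ℝ,
        f ((Fin.insertNth i ((1 : Fin (n+1) → ℝ) i) x : Fin (n+1) → ℝ)) i
          = f ((Fin.insertNth i ((0 : Fin (n+1) → ℝ) i) x : Fin (n+1) → ℝ)) i := by
      intro i x
      have hins : (Fin.insertNth i (1:ℝ) x : Fin (n+1) → ℝ)
          = (Fin.insertNth i (0:ℝ) x : Fin (n+1) → ℝ) + Pi.single i 1 := by
        funext j
        refine Fin.succAboveCases i ?_ ?_ j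
        · simp
        · intro k
          simp [Fin.succAbove_ne i k, Pi.single_apply, (Fin.succAbove_ne i k).symm]
      simp only [Pi.one_apply, Pi.zero_apply, hf, hins, hper]
    rw [funext hωsum] at key
    rw [key]
    apply Finset.sum_eq_zero
    intro i _
    rw [sub_eq_zero]
    exact setIntegral_congr_fun measurableSet_Icc (fun x _ => hfaces i x)


/-- Time-reversal cancellation (eq:11) in the proof of Proposition A.4:
with `∂_τ S = ω·∇_φ S`, the torus average of `A(φ) + B(φ)` vanishes, where
`A(φ) = ∫₀¹∫₀^λ∫₀^{λ'} ∂_τS(λ-1/2,φ)·S(λ''-1/2,φ)` and `B` is the same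
expression with `S(μ,φ)` replaced by `S(-μ,φ)`. -/
theorem stmt_8 (d m : ℕ) (ω : Fin m → ℝ)
    (S : ℝ → (Fin m → ℝ) → EuclideanSpace ℝ (Fin d))
    (dS : ℝ → (Fin m → ℝ) → ((Fin m → ℝ) →L[ℝ] EuclideanSpace ℝ (Fin d)))
    (hdS : ∀ μ φ, HasFDerivAt (fun ψ => S μ ψ) (dS μ φ) φ)
    (hScont : Continuous fun p : ℝ × (Fin m → ℝ) => S p.1 p.2)
    (hdScont : Continuous fun p : ℝ × (Fin m → ℝ) => dS p.1 p.2)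
    (hper : ∀ μ (φ : Fin m → ℝ) (n : Fin m → ℤ),
      S μ (φ + fun i => (n i : ℝ)) = S μ φ)
    (A B : (Fin m → ℝ) → ℝ)
    (hA : ∀ φ, A φ = ∫ lam in (0:ℝ)..1, ∫ lam' in (0:ℝ)..lam,
      ∫ lam'' in (0:ℝ)..lam',
        (inner ℝ (dS (lam - 1/2) φ ω) (S (lam'' - 1/2) φ) : ℝ))
    (hB : ∀ φ, B φ = ∫ lam in (0:ℝ)..1, ∫ lam' in (0:ℝ)..lam,
      ∫ lam'' in (0:ℝ)..lam',
        (inner ℝ (dS (-(lam - 1/2)) φ ω) (S (-(lam'' - 1/2)) φ) : ℝ)) :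
    ∫ φ in Set.Icc (0 : Fin m → ℝ) 1, (A φ + B φ) = 0 := by
  -- the scalar integrand
  set f : ℝ → ℝ → (Fin m → ℝ) → ℝ :=
    fun x y φ => (inner ℝ (dS (x - 1/2) φ ω) (S (y - 1/2) φ) : ℝ) with hfdef
  have hfc : Continuous fun p : (ℝ × ℝ) × (Fin m → ℝ) => f p.1.1 p.1.2 p.2 := by
    apply Continuous.inner
    · exact (hdScont.comp (by fun_prop : Continuous fun p : (ℝ × ℝ) × (Fin m → ℝ) =>
        ((p.1.1 - 1/2 : ℝ), p.2))).clm_apply continuous_const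
    · exact hScont.comp (by fun_prop : Continuous fun p : (ℝ × ℝ) × (Fin m → ℝ) =>
        ((p.1.2 - 1/2 : ℝ), p.2))
  have hfc1 : ∀ x φ, Continuous fun y => f x y φ := by
    intro x φ
    exact hfc.comp (by fun_prop : Continuous fun y : ℝ => (((x:ℝ), y), φ))
  have hfcflip : ∀ x φ, Continuous fun y => f (1 - x) (1 - y) φ := by
    intro x φ
    exact hfc.comp (by fun_prop : Continuous fun y : ℝ => (((1 - x : ℝ), (1 - y : ℝ)), φ))
  -- Step 1: pointwise reduction of A
  have hA' : ∀ φ, A φ = ∫ x in (0:ℝ)..1, ∫ s in (0:ℝ)..x, (x - s) * f x s φ := by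
    intro φ
    rw [hA φ]
    exact intervalIntegral.integral_congr fun x _ => cauchy_iter _ (hfc1 x φ) x
  -- Step 2: pointwise reduction of B
  have hB' : ∀ φ, B φ = ∫ x in (0:ℝ)..1, ∫ s in (0:ℝ)..x,
      (x - s) * f (1 - x) (1 - s) φ := by
    intro φ
    rw [hB φ]
    have hid : ∀ lam lam'' : ℝ,
        (inner ℝ (dS (-(lam - 1/2)) φ ω) (S (-(lam'' - 1/2)) φ) : ℝ)
          = f (1 - lam) (1 - lam'') φ := by
      intro lam lam''
      have e1 : -(lam - 1/2) = (1 - lam) - 1/2 := by ring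
      have e2 : -(lam'' - 1/2) = (1 - lam'') - 1/2 := by ring
      rw [hfdef]; rw [e1, e2]
    simp only [hid]
    exact intervalIntegral.integral_congr fun x _ => cauchy_iter _ (hfcflip x φ) x
  -- Step 3: reflect B
  have hB'' : ∀ φ, B φ = ∫ x in (0:ℝ)..1, ∫ s in x..1, (s - x) * f x s φ := by
    intro φ
    rw [hB' φ]
    have refl1 : (∫ x in (0:ℝ)..1, ∫ s in (0:ℝ)..x, (x - s) * f (1 - x) (1 - s) φ)
        = ∫ x in (0:ℝ)..1, ∫ s in (0:ℝ)..(1 - x), ((1 - x) - s) * f (x) (1 - s) φ := by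
      have := intervalIntegral.integral_comp_sub_left
        (a := (0:ℝ)) (b := 1)
        (fun x => ∫ s in (0:ℝ)..x, (x - s) * f (1 - x) (1 - s) φ) 1
      simp only [sub_zero, sub_self] at this
      rw [← this]
      apply intervalIntegral.integral_congr
      intro x _
      simp only [sub_sub_cancel]
    rw [refl1]
    apply intervalIntegral.integral_congr
    intro x _
    have h := intervalIntegral.integral_comp_sub_left
      (a := (0:ℝ)) (b := 1 - x) (fun s => (s - x) * f x s φ) 1
    simp only [sub_zero, sub_sub_cancel] at h
    beta_reduce
    rw [← h]
    apply intervalIntegral.integral_congr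
    intro s _
    ring_nf
  -- continuity facts
  have hcontF : ∀ φ, Continuous fun p : ℝ × ℝ => f p.1 p.2 φ := by
    intro φ
    exact hfc.comp (by fun_prop : Continuous fun p : ℝ × ℝ => ((p.1, p.2), φ))
  have hcont1 : ∀ φ, Continuous fun x : ℝ => ∫ s in (0:ℝ)..x, (x - s) * f x s φ := by
    intro φ
    exact intervalIntegral.continuous_parametric_intervalIntegral_of_continuous
      (f := fun (x : ℝ) (s : ℝ) => (x - s) * f x s φ)
      ((continuous_fst.sub continuous_snd).mul (hcontF φ)) continuous_id
  have hcont2 : ∀ φ, Continuous fun x : ℝ => ∫ s in x..(1:ℝ), (s - x) * f x s φ := by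
    intro φ
    have heq : (fun x : ℝ => ∫ s in x..(1:ℝ), (s - x) * f x s φ)
        = fun x : ℝ => (∫ s in (0:ℝ)..1, (s - x) * f x s φ)
            - ∫ s in (0:ℝ)..x, (s - x) * f x s φ := by
      funext x
      rw [eq_sub_iff_add_eq, add_comm]
      exact intervalIntegral.integral_add_adjacent_intervals
        (((continuous_id.sub continuous_const).mul (hfc1 x φ)).intervalIntegrable 0 x)
        (((continuous_id.sub continuous_const).mul (hfc1 x φ)).intervalIntegrable x 1)
    rw [heq]
    apply Continuous.sub
    · exact intervalIntegral.continuous_parametric_intervalIntegral_of_continuous'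
        (f := fun (x : ℝ) (s : ℝ) => (s - x) * f x s φ)
        ((continuous_snd.sub continuous_fst).mul (hcontF φ)) 0 1
    · exact intervalIntegral.continuous_parametric_intervalIntegral_of_continuous
        (f := fun (x : ℝ) (s : ℝ) => (s - x) * f x s φ)
        ((continuous_snd.sub continuous_fst).mul (hcontF φ)) continuous_id
  -- pointwise combination
  have hsum : ∀ φ, A φ + B φ
      = ∫ x in (0:ℝ)..1, ∫ y in (0:ℝ)..1, |x - y| * f x y φ := by
    intro φ
    rw [hA' φ, hB'' φ, ← intervalIntegral.integral_add
      ((hcont1 φ).intervalIntegrable 0 1) ((hcont2 φ).intervalIntegrable 0 1)]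
    apply intervalIntegral.integral_congr
    intro x hx
    rw [Set.uIcc_of_le (zero_le_one (α := ℝ))] at hx
    beta_reduce
    have habs : Continuous fun y : ℝ => |x - y| * f x y φ :=
      ((continuous_const.sub continuous_id).abs).mul (hfc1 x φ)
    rw [← intervalIntegral.integral_add_adjacent_intervals (a := (0:ℝ)) (b := x) (c := 1)
      (habs.intervalIntegrable 0 x) (habs.intervalIntegrable x 1)]
    congr 1
    · apply intervalIntegral.integral_congr
      intro y hy
      rw [Set.uIcc_of_le hx.1] at hy
      beta_reduce
      rw [abs_of_nonneg (sub_nonneg.2 hy.2)]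
    · apply intervalIntegral.integral_congr
      intro y hy
      rw [Set.uIcc_of_le hx.2] at hy
      beta_reduce
      rw [abs_sub_comm, abs_of_nonneg (sub_nonneg.2 hy.1)]
  -- the averaged kernel
  set T : ℝ → ℝ → ℝ :=
    fun x y => ∫ φ in Set.Icc (0 : Fin m → ℝ) 1, f x y φ with hTdef
  have hTc : Continuous fun p : ℝ × ℝ => T p.1 p.2 := by
    apply continuous_parametric_integral_of_continuous
      (f := fun (p : ℝ × ℝ) (φ : Fin m → ℝ) => f p.1 p.2 φ)
    · exact hfc
    · exact isCompact_Icc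
  have hfint : ∀ x y, IntegrableOn (fun φ => f x y φ)
      (Set.Icc (0 : Fin m → ℝ) 1) volume := by
    intro x y
    exact ((hfc.comp (by fun_prop :
      Continuous fun φ : Fin m → ℝ => (((x:ℝ), (y:ℝ)), φ))).continuousOn).integrableOn_compact
      isCompact_Icc
  -- antisymmetry of T via the divergence theorem and periodicity
  have hTanti : ∀ x y, T x y + T y x = 0 := by
    intro x y
    set g : (Fin m → ℝ) → ℝ :=
      fun φ => (inner ℝ (S (x - 1/2) φ) (S (y - 1/2) φ) : ℝ) with hgdef
    set g' : (Fin m → ℝ) → ((Fin m → ℝ) →L[ℝ] ℝ) :=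
      fun φ => (fderivInnerCLM ℝ (S (x - 1/2) φ, S (y - 1/2) φ)).comp
        ((dS (x - 1/2) φ).prod (dS (y - 1/2) φ)) with hg'def
    have hg' : ∀ φ, HasFDerivAt g (g' φ) φ :=
      fun φ => (hdS (x - 1/2) φ).inner ℝ (hdS (y - 1/2) φ)
    have hg'apply : ∀ φ, g' φ ω
        = (inner ℝ (S (x - 1/2) φ) (dS (y - 1/2) φ ω) : ℝ)
          + (inner ℝ (dS (x - 1/2) φ ω) (S (y - 1/2) φ) : ℝ) := by
      intro φ
      simp [hg'def, fderivInnerCLM_apply]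
    have hgc : Continuous g := by
      apply Continuous.inner
      · exact hScont.comp (by fun_prop : Continuous fun φ : Fin m → ℝ => ((x - 1/2 : ℝ), φ))
      · exact hScont.comp (by fun_prop : Continuous fun φ : Fin m → ℝ => ((y - 1/2 : ℝ), φ))
    have hg'c : Continuous fun φ => g' φ ω := by
      rw [funext hg'apply]
      apply Continuous.add
      · apply Continuous.inner
        · exact hScont.comp (by fun_prop : Continuous fun φ : Fin m → ℝ => ((x - 1/2 : ℝ), φ))
        · exact (hdScont.comp (by fun_prop :
            Continuous fun φ : Fin m → ℝ => ((y - 1/2 : ℝ), φ))).clm_apply continuous_const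
      · apply Continuous.inner
        · exact (hdScont.comp (by fun_prop :
            Continuous fun φ : Fin m → ℝ => ((x - 1/2 : ℝ), φ))).clm_apply continuous_const
        · exact hScont.comp (by fun_prop : Continuous fun φ : Fin m → ℝ => ((y - 1/2 : ℝ), φ))
    have hperg : ∀ (φ : Fin m → ℝ) (i : Fin m), g (φ + Pi.single i 1) = g φ := by
      intro φ i
      have hcast : (fun j => (((Pi.single i (1:ℤ) : Fin m → ℤ)) j : ℝ))
          = (Pi.single i (1:ℝ) : Fin m → ℝ) := by
        funext j
        by_cases h : j = i
        · subst h; simp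
        · simp [Pi.single_apply, h]
      simp only [hgdef]
      rw [← hcast, hper, hper]
    have hzero := torus_dir_deriv ω g g' hg' hgc hg'c hperg
    rw [setIntegral_congr_fun measurableSet_Icc (fun φ _ => hg'apply φ)] at hzero
    rw [MeasureTheory.integral_add] at hzero
    · have e1 : (∫ φ in Set.Icc (0 : Fin m → ℝ) 1,
          (inner ℝ (S (x - 1/2) φ) (dS (y - 1/2) φ ω) : ℝ)) = T y x := by
        rw [hTdef]
        apply setIntegral_congr_fun measurableSet_Icc
        intro φ _
        exact real_inner_comm _ _
      rw [e1] at hzero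
      linarith
    · refine ContinuousOn.integrableOn_compact isCompact_Icc (Continuous.continuousOn ?_)
      apply Continuous.inner
      · exact hScont.comp (by fun_prop : Continuous fun φ : Fin m → ℝ => ((x - 1/2 : ℝ), φ))
      · exact (hdScont.comp (by fun_prop :
            Continuous fun φ : Fin m → ℝ => ((y - 1/2 : ℝ), φ))).clm_apply continuous_const
    · exact hfint x y
  -- push the torus integral inside
  have hkouter : Continuous fun p : ℝ × (Fin m → ℝ) =>
      ∫ y in (0:ℝ)..1, |p.1 - y| * f p.1 y p.2 := by
    apply intervalIntegral.continuous_parametric_intervalIntegral_of_continuous'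
      (f := fun (p : ℝ × (Fin m → ℝ)) (y : ℝ) => |p.1 - y| * f p.1 y p.2)
    show Continuous fun q : (ℝ × (Fin m → ℝ)) × ℝ => |q.1.1 - q.2| * f q.1.1 q.2 q.1.2
    apply Continuous.mul
    · exact (continuous_fst.fst.sub continuous_snd).abs
    · exact hfc.comp (by fun_prop :
        Continuous fun q : (ℝ × (Fin m → ℝ)) × ℝ => ((q.1.1, q.2), q.1.2))
  have step1 : (∫ φ in Set.Icc (0 : Fin m → ℝ) 1, (A φ + B φ))
      = ∫ x in (0:ℝ)..1, ∫ y in (0:ℝ)..1, |x - y| * T x y := by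
    calc (∫ φ in Set.Icc (0 : Fin m → ℝ) 1, (A φ + B φ))
        = ∫ φ in Set.Icc (0 : Fin m → ℝ) 1,
            ∫ x in (0:ℝ)..1, ∫ y in (0:ℝ)..1, |x - y| * f x y φ := by
          exact setIntegral_congr_fun measurableSet_Icc (fun φ _ => hsum φ)
      _ = ∫ x in (0:ℝ)..1, ∫ φ in Set.Icc (0 : Fin m → ℝ) 1,
            ∫ y in (0:ℝ)..1, |x - y| * f x y φ := by
          exact swap_cube_interval _ hkouter
      _ = ∫ x in (0:ℝ)..1, ∫ y in (0:ℝ)..1, |x - y| * T x y := by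
          apply intervalIntegral.integral_congr
          intro x _
          beta_reduce
          rw [swap_cube_interval (fun y φ => |x - y| * f x y φ) (by
            apply Continuous.mul
            · exact (continuous_const.sub continuous_fst).abs
            · exact hfc.comp (by fun_prop :
                Continuous fun q : ℝ × (Fin m → ℝ) => (((x:ℝ), q.1), q.2)))]
          apply intervalIntegral.integral_congr
          intro y _
          beta_reduce
          rw [hTdef]
          exact MeasureTheory.integral_const_mul _ _
  rw [step1]
  -- conclude by the symmetry argument
  set Q : ℝ → ℝ → ℝ := fun x y => |x - y| * T x y with hQdef
  have hQc : Continuous fun p : ℝ × ℝ => Q p.1 p.2 :=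
    ((continuous_fst.sub continuous_snd).abs).mul hTc
  have hQanti : ∀ x y, Q x y = - Q y x := by
    intro x y
    have := hTanti x y
    rw [hQdef]
    simp only []
    rw [abs_sub_comm]
    nlinarith [abs_nonneg (y - x)]
  have hswap := swap_square Q hQc
  have hneg : (∫ y in (0:ℝ)..1, ∫ x in (0:ℝ)..1, Q x y)
      = - ∫ x in (0:ℝ)..1, ∫ y in (0:ℝ)..1, Q x y := by
    rw [← intervalIntegral.integral_neg]
    apply intervalIntegral.integral_congr
    intro y _
    beta_reduce
    rw [← intervalIntegral.integral_neg]
    apply intervalIntegral.integral_congr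
    intro x _
    beta_reduce
    rw [hQanti x y]
  have : (∫ x in (0:ℝ)..1, ∫ y in (0:ℝ)..1, Q x y) = 0 := by
    have h := hswap.trans hneg
    linarith
  exact this
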